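/- Suppose 0 < r₁ ≤ r₂, V = ℝ^d×{0}, and let p ∈ R̄_{1,V}(0,r) and p' ∈ B̄(p, r₁) (Heisenberg ball). Then |x'^d| ≤ 2r₁, |(x'⊥, y')| ≤ 2r₂, and |z'| ≤ 20r₂². -/

import Mathlib

open scoped RealInnerProductSpace

/-- The underlying set of the Heisenberg group `ℍⁿ = ℝⁿ × ℝⁿ × ℝ`. -/
abbrev Heis (n : ℕ) := EuclideanSpace ℝ (Fin n) × EuclideanSpace ℝ (Fin n) × ℝ

/-- The Heisenberg group operation. -/
noncomputable def hMul {n : ℕ} (p p' : Heis n) : Heis n :=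
  (p.1 + p'.1, p.2.1 + p'.2.1,
    p.2.2 + p'.2.2 + 2 * (⟪p.1, p'.2.1⟫ - ⟪p.2.1, p'.1⟫))

/-- The Heisenberg group inverse. -/
def hInv {n : ℕ} (p : Heis n) : Heis n := (-p.1, -p.2.1, -p.2.2)

/-- `|(a,b)|`, the Euclidean norm of a pair of vectors viewed in `ℝ^{2n}`. -/
noncomputable def pnorm {n : ℕ} (a b : EuclideanSpace ℝ (Fin n)) : ℝ :=
  Real.sqrt (‖a‖ ^ 2 + ‖b‖ ^ 2)

/-- The homogeneous (Korányi) norm. -/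
noncomputable def hNorm {n : ℕ} (p : Heis n) : ℝ :=
  (pnorm p.1 p.2.1 ^ 4 + p.2.2 ^ 2) ^ ((1 : ℝ) / 4)

/-- The left-invariant Heisenberg metric `d_ℍ(p,p') = ‖p⁻¹ * p'‖_ℍ`. -/
noncomputable def dH {n : ℕ} (p p' : Heis n) : ℝ := hNorm (hMul (hInv p) p')

/-- `x ↦ x^d = (x₁,…,x_d,0,…,0)`. -/
noncomputable def trunc {n : ℕ} (d : ℕ) (x : EuclideanSpace ℝ (Fin n)) :
    EuclideanSpace ℝ (Fin n) :=
  WithLp.toLp 2 (fun i => if (i : ℕ) < d then x i else 0)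

/-- `x ↦ x⊥ = (0,…,0,x_{d+1},…,x_n)`. -/
noncomputable def truncPerp {n : ℕ} (d : ℕ) (x : EuclideanSpace ℝ (Fin n)) :
    EuclideanSpace ℝ (Fin n) :=
  WithLp.toLp 2 (fun i => if (i : ℕ) < d then 0 else x i)

/-- The type-1 rectangle `R̄_{1,V}(0,r)` for `V = ℝ^d × {0}`. -/
noncomputable def rect1 (n d : ℕ) (r₁ r₂ : ℝ) : Set (Heis n) :=
  {p | ‖trunc d p.1‖ ≤ r₁ ∧
    pnorm (truncPerp d p.1) p.2.1 ^ 4 +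
      |p.2.2 + 2 * ⟪trunc d p.1, trunc d p.2.1⟫| ^ 2 ≤ r₂ ^ 4}

/-- The type-2 rectangle `R̄_{2,V}(0,r)` for `V = ℝ^d × {0}`. -/
noncomputable def rect2 (n d : ℕ) (r₁ r₂ : ℝ) : Set (Heis n) :=
  {p | ‖trunc d p.1‖ ≤ r₁ ∧
    pnorm (truncPerp d p.1) p.2.1 ^ 4 +
      |p.2.2 - 2 * ⟪trunc d p.1, trunc d p.2.1⟫| ^ 2 ≤ r₂ ^ 4}

/-!
Write `p⁻¹ * p' = (Δx, Δy, Δz)`, so that `d_H(p, p') ≤ r₁` bounds `|(Δx, Δy)|` by `r₁` and `|Δz|`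
by `r₁²`. The first two bounds follow from the triangle inequality, since truncation is additive and
does not increase norms. For the vertical coordinate, `z' = z + Δz + 2(⟨x, y'⟩ - ⟨y, x'⟩)`, and
Cauchy–Schwarz together with `|x| ≤ 2r₂`, `|y| ≤ r₂`, `|x'| ≤ 3r₂`, `|y'| ≤ 2r₂`, `|z| ≤ 3r₂²`
gives `|z'| ≤ 18 r₂²`.
-/

lemma le_and_abs_le_sq_of_pow_four_add_sq_le {a b r : ℝ} (ha : 0 ≤ a) (hr : 0 ≤ r)
    (h : a ^ 4 + b ^ 2 ≤ r ^ 4) : a ≤ r ∧ |b| ≤ r ^ 2 :=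
  ⟨le_of_pow_le_pow_left₀ four_ne_zero hr (by nlinarith [sq_nonneg b]),
    le_of_pow_le_pow_left₀ two_ne_zero (by positivity)
      (by rw [sq_abs]; linarith [pow_nonneg ha 4, show (r ^ 2) ^ 2 = r ^ 4 by ring])⟩

lemma abs_inner_sub_inner_le {E : Type*} [NormedAddCommGroup E] [InnerProductSpace ℝ E]
    (a b a' b' : E) : |⟪a, b'⟫ - ⟪b, a'⟫| ≤ ‖a‖ * ‖b'‖ + ‖b‖ * ‖a'‖ :=
  (abs_sub _ _).trans (add_le_add (abs_real_inner_le_norm _ _) (abs_real_inner_le_norm _ _))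

section pnorm

variable {n : ℕ}

lemma pnorm_eq_norm_toLp (a b : EuclideanSpace ℝ (Fin n)) :
    pnorm a b = ‖WithLp.toLp 2 (a, b)‖ := by
  rw [pnorm, ← Real.sqrt_sq (norm_nonneg (WithLp.toLp 2 (a, b))), WithLp.prod_norm_sq_eq_of_L2]
  rfl

lemma pnorm_nonneg (a b : EuclideanSpace ℝ (Fin n)) : 0 ≤ pnorm a b :=
  Real.sqrt_nonneg _

lemma norm_le_pnorm_left (a b : EuclideanSpace ℝ (Fin n)) : ‖a‖ ≤ pnorm a b :=
  Real.le_sqrt_of_sq_le (le_add_of_nonneg_right (sq_nonneg _))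

lemma norm_le_pnorm_right (a b : EuclideanSpace ℝ (Fin n)) : ‖b‖ ≤ pnorm a b :=
  Real.le_sqrt_of_sq_le (le_add_of_nonneg_left (sq_nonneg _))

lemma pnorm_add_le (a b c e : EuclideanSpace ℝ (Fin n)) :
    pnorm (a + c) (b + e) ≤ pnorm a b + pnorm c e := by
  simp only [pnorm_eq_norm_toLp]
  exact norm_add_le (WithLp.toLp 2 (a, b)) (WithLp.toLp 2 (c, e))

lemma pnorm_le_pnorm_of_norm_le {a a' : EuclideanSpace ℝ (Fin n)} (b : EuclideanSpace ℝ (Fin n))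
    (h : ‖a‖ ≤ ‖a'‖) : pnorm a b ≤ pnorm a' b :=
  Real.sqrt_le_sqrt (by gcongr)

end pnorm

section trunc

variable {n d : ℕ}

lemma trunc_add (x y : EuclideanSpace ℝ (Fin n)) :
    trunc d (x + y) = trunc d x + trunc d y := by
  ext i
  simp only [trunc, PiLp.add_apply, PiLp.toLp_apply]
  split_ifs <;> simp

lemma truncPerp_add (x y : EuclideanSpace ℝ (Fin n)) :
    truncPerp d (x + y) = truncPerp d x + truncPerp d y := by
  ext i
  simp only [truncPerp, PiLp.add_apply, PiLp.toLp_apply]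
  split_ifs <;> simp

lemma trunc_add_truncPerp (x : EuclideanSpace ℝ (Fin n)) :
    trunc d x + truncPerp d x = x := by
  ext i
  simp only [trunc, truncPerp, PiLp.add_apply]
  split_ifs <;> simp

lemma norm_trunc_le (x : EuclideanSpace ℝ (Fin n)) : ‖trunc d x‖ ≤ ‖x‖ := by
  simp only [EuclideanSpace.norm_eq, trunc]
  gcongr with i
  split_ifs <;> simp

lemma norm_truncPerp_le (x : EuclideanSpace ℝ (Fin n)) : ‖truncPerp d x‖ ≤ ‖x‖ := by
  simp only [EuclideanSpace.norm_eq, truncPerp]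
  gcongr with i
  split_ifs <;> simp

end trunc

section Heis

variable {n : ℕ}

lemma hNorm_nonneg (p : Heis n) : 0 ≤ hNorm p :=
  Real.rpow_nonneg (by positivity) _

lemma hNorm_pow_four (p : Heis n) : hNorm p ^ 4 = pnorm p.1 p.2.1 ^ 4 + p.2.2 ^ 2 := by
  rw [hNorm, ← Real.rpow_natCast, ← Real.rpow_mul (by positivity)]
  norm_num

lemma pnorm_le_and_abs_le_sq_of_hNorm_le {p : Heis n} {r : ℝ} (h : hNorm p ≤ r) :
    pnorm p.1 p.2.1 ≤ r ∧ |p.2.2| ≤ r ^ 2 := by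
  have hr : 0 ≤ r := (hNorm_nonneg p).trans h
  refine le_and_abs_le_sq_of_pow_four_add_sq_le (pnorm_nonneg _ _) hr ?_
  rw [← hNorm_pow_four]
  gcongr
  exact hNorm_nonneg p

lemma hMul_hInv (p p' : Heis n) :
    hMul (hInv p) p' = (p'.1 - p.1, p'.2.1 - p.2.1,
      p'.2.2 - p.2.2 - 2 * (⟪p.1, p'.2.1⟫ - ⟪p.2.1, p'.1⟫)) := by
  simp only [hMul, hInv, inner_neg_left]
  ext <;> simp only [neg_add_eq_sub]
  ring

lemma pnorm_sub_le_and_abs_sub_le_of_dH_le {p p' : Heis n} {r : ℝ} (h : dH p p' ≤ r) :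
    pnorm (p'.1 - p.1) (p'.2.1 - p.2.1) ≤ r ∧
      |p'.2.2 - p.2.2 - 2 * (⟪p.1, p'.2.1⟫ - ⟪p.2.1, p'.1⟫)| ≤ r ^ 2 := by
  rw [dH, hMul_hInv] at h
  exact (pnorm_le_and_abs_le_sq_of_hNorm_le h :)

lemma pnorm_le_and_abs_le_sq_of_mem_rect1 {d : ℕ} {r₁ r₂ : ℝ} {p : Heis n}
    (hp : p ∈ rect1 n d r₁ r₂) (hr₂ : 0 ≤ r₂) :
    pnorm (truncPerp d p.1) p.2.1 ≤ r₂ ∧ |p.2.2 + 2 * ⟪trunc d p.1, trunc d p.2.1⟫| ≤ r₂ ^ 2 :=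
  le_and_abs_le_sq_of_pow_four_add_sq_le (pnorm_nonneg _ _) hr₂ (by simpa only [sq_abs] using hp.2)

lemma norm_le_and_abs_le_of_mem_rect1 {d : ℕ} {r₁ r₂ : ℝ} {p : Heis n}
    (hp : p ∈ rect1 n d r₁ r₂) (hr : r₁ ≤ r₂) :
    ‖p.1‖ ≤ 2 * r₂ ∧ ‖p.2.1‖ ≤ r₂ ∧ |p.2.2| ≤ 3 * r₂ ^ 2 := by
  have hr₂ : 0 ≤ r₂ := ((norm_nonneg _).trans hp.1).trans hr
  obtain ⟨hperp, hz⟩ := pnorm_le_and_abs_le_sq_of_mem_rect1 hp hr₂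
  have hy : ‖p.2.1‖ ≤ r₂ := (norm_le_pnorm_right _ _).trans hperp
  have hyd : ‖trunc d p.2.1‖ ≤ r₂ := (norm_trunc_le _).trans hy
  have hinner : |⟪trunc d p.1, trunc d p.2.1⟫| ≤ r₂ ^ 2 :=
    (abs_real_inner_le_norm _ _).trans (by nlinarith [norm_nonneg (trunc d p.2.1), hp.1])
  refine ⟨?_, hy, ?_⟩
  · calc ‖p.1‖ = ‖trunc d p.1 + truncPerp d p.1‖ := by rw [trunc_add_truncPerp]
      _ ≤ r₁ + r₂ := (norm_add_le _ _).trans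
          (add_le_add hp.1 ((norm_le_pnorm_left _ _).trans hperp))
      _ ≤ 2 * r₂ := by linarith
  · set I := ⟪trunc d p.1, trunc d p.2.1⟫
    calc |p.2.2| = |(p.2.2 + 2 * I) - 2 * I| := by ring_nf
      _ ≤ |p.2.2 + 2 * I| + 2 * |I| := by
          simpa only [abs_mul, abs_two] using abs_sub (p.2.2 + 2 * I) (2 * I)
      _ ≤ 3 * r₂ ^ 2 := by linarith

lemma abs_snd_snd_le_of_dH_le {p p' : Heis n} {a b c r : ℝ} (hx : ‖p.1‖ ≤ a) (hy : ‖p.2.1‖ ≤ b)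
    (hz : |p.2.2| ≤ c) (h : dH p p' ≤ r) :
    |p'.2.2| ≤ c + r ^ 2 + 2 * (a * (b + r) + b * (a + r)) := by
  obtain ⟨hΔ, hΔz⟩ := pnorm_sub_le_and_abs_sub_le_of_dH_le h
  have hx' : ‖p'.1‖ ≤ a + r :=
    (norm_le_norm_add_norm_sub' _ p.1).trans (add_le_add hx ((norm_le_pnorm_left _ _).trans hΔ))
  have hy' : ‖p'.2.1‖ ≤ b + r :=
    (norm_le_norm_add_norm_sub' _ p.2.1).trans (add_le_add hy ((norm_le_pnorm_right _ _).trans hΔ))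
  have hω : |⟪p.1, p'.2.1⟫ - ⟪p.2.1, p'.1⟫| ≤ a * (b + r) + b * (a + r) :=
    (abs_inner_sub_inner_le _ _ _ _).trans (add_le_add
      (mul_le_mul hx hy' (norm_nonneg _) ((norm_nonneg _).trans hx))
      (mul_le_mul hy hx' (norm_nonneg _) ((norm_nonneg _).trans hy)))
  set ω := ⟪p.1, p'.2.1⟫ - ⟪p.2.1, p'.1⟫
  calc |p'.2.2| = |p.2.2 + (p'.2.2 - p.2.2 - 2 * ω) + 2 * ω| := by ring_nf
    _ ≤ |p.2.2| + |p'.2.2 - p.2.2 - 2 * ω| + 2 * |ω| := by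
        simpa only [abs_mul, abs_two] using abs_add_three p.2.2 (p'.2.2 - p.2.2 - 2 * ω) (2 * ω)
    _ ≤ _ := by linarith

end Heis

theorem rect1_ball_coordinate_bounds_small_r1_general {n d : ℕ} {r₁ r₂ : ℝ}
    (hr : r₁ ≤ r₂) (p p' : Heis n)
    (hp : p ∈ rect1 n d r₁ r₂) (hp' : dH p p' ≤ r₁) :
    ‖trunc d p'.1‖ ≤ 2 * r₁ ∧
    pnorm (truncPerp d p'.1) p'.2.1 ≤ 2 * r₂ ∧
    |p'.2.2| ≤ 20 * r₂ ^ 2 := by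
  have hr₁ : 0 ≤ r₁ := (norm_nonneg _).trans hp.1
  obtain ⟨hperp, -⟩ := pnorm_le_and_abs_le_sq_of_mem_rect1 hp (hr₁.trans hr)
  obtain ⟨hΔ, -⟩ := pnorm_sub_le_and_abs_sub_le_of_dH_le hp'
  obtain ⟨hx, hy, hz⟩ := norm_le_and_abs_le_of_mem_rect1 hp hr
  refine ⟨?_, ?_, ?_⟩
  · calc ‖trunc d p'.1‖ = ‖trunc d p.1 + trunc d (p'.1 - p.1)‖ := by
          rw [← trunc_add, add_sub_cancel]
      _ ≤ r₁ + r₁ := (norm_add_le _ _).trans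
          (add_le_add hp.1 ((norm_trunc_le _).trans ((norm_le_pnorm_left _ _).trans hΔ)))
      _ = 2 * r₁ := by ring
  · calc pnorm (truncPerp d p'.1) p'.2.1
        = pnorm (truncPerp d p.1 + truncPerp d (p'.1 - p.1)) (p.2.1 + (p'.2.1 - p.2.1)) := by
          rw [← truncPerp_add, add_sub_cancel, add_sub_cancel]
      _ ≤ r₂ + r₁ := (pnorm_add_le _ _ _ _).trans
          (add_le_add hperp ((pnorm_le_pnorm_of_norm_le _ (norm_truncPerp_le _)).trans hΔ))
      _ ≤ 2 * r₂ := by linarith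
  · calc |p'.2.2| ≤ 3 * r₂ ^ 2 + r₁ ^ 2 + 2 * (2 * r₂ * (r₂ + r₁) + r₂ * (2 * r₂ + r₁)) :=
          abs_snd_snd_le_of_dH_le hx hy hz hp'
      _ ≤ 20 * r₂ ^ 2 := by nlinarith

theorem rect1_ball_coordinate_bounds_small_r1 {n d : ℕ} (hd : d ≤ n) {r₁ r₂ : ℝ}
    (hr₁ : 0 < r₁) (hr : r₁ ≤ r₂) (p p' : Heis n)
    (hp : p ∈ rect1 n d r₁ r₂) (hp' : dH p p' ≤ r₁) :
    ‖trunc d p'.1‖ ≤ 2 * r₁ ∧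
    pnorm (truncPerp d p'.1) p'.2.1 ≤ 2 * r₂ ∧
    |p'.2.2| ≤ 20 * r₂ ^ 2 :=
  rect1_ball_coordinate_bounds_small_r1_general hr p p' hp hp'
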